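/- arXiv:2505.17032 — 2 statements merged into one kernel-verified Lean document; each statement's English description precedes it below -/
import Mathlib

section
/- In the deterministic setting of the previous statement, the loss functional l(y₀) = |g(x(T)) − ỹ(T;y₀)|², where ỹ(·;y₀) solves ỹ' = −f(t,x(t),ỹ), ỹ(0)=y₀, attains the value 0 at y₀* = u(0,ξ), and if additionally f is C^1 in y, then l(y₀) = 0 implies y₀ = u(0,ξ). That is, the loss has a unique global minimizer equal to the PDE solution at the initial point. -/
open Set

/-!
Along the characteristic `x`, the PDE says exactly that `t ↦ u(t, x(t))` solves the ODE
`ỹ' = -f(t, x(t), ỹ)`; it starts at `u(0, ξ)` and ends at `u(T, x(T)) = g(x(T))`, so the loss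
vanishes at `u(0, ξ)`. Conversely, since the ODE is Lipschitz in `ỹ`, two of its solutions that
agree at time `T` agree at time `0`, so a zero of the loss is `u(0, ξ)`.
-/

theorem DifferentiableAt.hasDerivAt_apply_apply {E : Type*} [NormedAddCommGroup E]
    [NormedSpace ℝ E] {u : ℝ → ℝ → E} {x : ℝ → ℝ} {t x' : ℝ}
    (hu : DifferentiableAt ℝ (Function.uncurry u) (t, x t)) (hx : HasDerivAt x x' t) :
    HasDerivAt (fun s => u s (x s))
      (deriv (fun s => u s (x t)) t + x' • deriv (fun y => u t y) (x t)) t := by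
  set D := fderiv ℝ (Function.uncurry u) (t, x t)
  have hD : HasFDerivAt (Function.uncurry u) D (t, x t) := hu.hasFDerivAt
  have h_time : HasDerivAt (fun s => u s (x t)) (D (1, 0)) t :=
    hD.comp_hasDerivAt (f := fun s => (s, x t)) t
      ((hasDerivAt_id t).prodMk (hasDerivAt_const t (x t)))
  have h_space : HasDerivAt (fun y => u t y) (D (0, 1)) (x t) :=
    hD.comp_hasDerivAt (f := fun y => (t, y)) (x t)
      ((hasDerivAt_const (x t) t).prodMk (hasDerivAt_id (x t)))
  have h_total : HasDerivAt (fun s => u s (x s)) (D (1, x')) t :=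
    hD.comp_hasDerivAt (f := fun s => (s, x s)) t ((hasDerivAt_id t).prodMk hx)
  have h_split : ((1 : ℝ), x') = (1, 0) + x' • (0, 1) := by simp
  rwa [h_time.deriv, h_space.deriv, ← map_smul, ← map_add, ← h_split]

section ODE

variable {E : Type*} [NormedAddCommGroup E] [NormedSpace ℝ E]
  {v : ℝ → E → E} {K : NNReal} {f g : ℝ → E} {a b : ℝ}

theorem ODE_solution_eq_left_iff_eq_right (hv : ∀ t, LipschitzWith K (v t))
    (hf : ∀ t ∈ Icc a b, HasDerivAt f (v t (f t)) t)
    (hg : ∀ t ∈ Icc a b, HasDerivAt g (v t (g t)) t) (hab : a ≤ b) :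
    f a = g a ↔ f b = g b := by
  have hf_cont : ContinuousOn f (Icc a b) := HasDerivAt.continuousOn hf
  have hg_cont : ContinuousOn g (Icc a b) := HasDerivAt.continuousOn hg
  constructor
  · intro ha
    exact ODE_solution_unique hv hf_cont
      (fun t ht => (hf t (Ico_subset_Icc_self ht)).hasDerivWithinAt) hg_cont
      (fun t ht => (hg t (Ico_subset_Icc_self ht)).hasDerivWithinAt) ha ⟨hab, le_rfl⟩
  · intro hb
    exact ODE_solution_unique_of_mem_Icc_left (s := fun _ => univ)
      (fun t _ => (hv t).lipschitzOnWith) hf_cont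
      (fun t ht => (hf t (Ioc_subset_Icc_self ht)).hasDerivWithinAt) (fun _ _ => trivial)
      hg_cont (fun t ht => (hg t (Ioc_subset_Icc_self ht)).hasDerivWithinAt)
      (fun _ _ => trivial) hb ⟨le_rfl, hab⟩

end ODE

theorem shooting_loss_unique_minimizer_general
    (T L ξ : ℝ) (hT : 0 ≤ T)
    (μ : ℝ → ℝ → ℝ) (f : ℝ → ℝ → ℝ → ℝ) (g : ℝ → ℝ)
    (u : ℝ → ℝ → ℝ) (hu : ContDiff ℝ 1 (Function.uncurry u))
    (hPDE : ∀ t ∈ Set.Icc (0 : ℝ) T, ∀ x : ℝ,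
      deriv (fun s => u s x) t + μ t x * deriv (fun y => u t y) x
        + f t x (u t x) = 0)
    (hterm : ∀ x, u T x = g x)
    (hfL : ∀ t x a b, |f t x a - f t x b| ≤ L * |a - b|)
    (x : ℝ → ℝ) (hx : ∀ t ∈ Set.Icc (0 : ℝ) T, HasDerivAt x (μ t (x t)) t)
    (hx0 : x 0 = ξ)
    -- the flow `y₀ ↦ ỹ(·; y₀)` of the ODE `ỹ' = -f(t, x(t), ỹ)`
    (Yt : ℝ → ℝ → ℝ)
    (hY0 : ∀ y₀, Yt y₀ 0 = y₀)
    (hYode : ∀ y₀, ∀ t ∈ Set.Icc (0 : ℝ) T,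
      HasDerivAt (Yt y₀) (-(f t (x t) (Yt y₀ t))) t) :
    |g (x T) - Yt (u 0 ξ) T| ^ 2 = 0
    ∧ ∀ y₀ : ℝ, |g (x T) - Yt y₀ T| ^ 2 = 0 → y₀ = u 0 ξ := by
  have hLip : ∀ t, LipschitzWith (Real.toNNReal L) fun y => -f t (x t) y := fun t =>
    LipschitzWith.of_dist_le' fun a b => by
      simpa only [Real.dist_eq, neg_sub_neg, abs_sub_comm] using hfL t (x t) b a
  have hchar : ∀ t ∈ Icc 0 T, HasDerivAt (fun s => u s (x s)) (-f t (x t) (u t (x t))) t :=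
    fun t ht => ((hu.differentiable one_ne_zero (t, x t)).hasDerivAt_apply_apply
      (hx t ht)).congr_deriv (by rw [smul_eq_mul]; linarith [hPDE t ht (x t)])
  have h_at_T : g (x T) = Yt (u 0 ξ) T := by
    rw [← hterm]
    exact (ODE_solution_eq_left_iff_eq_right hLip hchar (hYode _) hT).1 (by rw [hY0, hx0])
  refine ⟨by rw [h_at_T, sub_self, abs_zero, sq, mul_zero], fun y₀ hy₀ => ?_⟩
  have h_hit : Yt y₀ T = Yt (u 0 ξ) T := by
    rw [← h_at_T, eq_comm, ← sub_eq_zero, ← abs_eq_zero, ← sq_eq_zero_iff]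
    exact hy₀
  simpa only [hY0] using (ODE_solution_eq_left_iff_eq_right hLip (hYode y₀) (hYode _) hT).2 h_hit

/-- The shooting loss `l(y₀) = |g(x(T)) − ỹ(T; y₀)|²` attains the value `0`
at `y₀* = u(0,ξ)`, and (with `f` C¹ in `y`) this is the unique global minimizer. -/
theorem shooting_loss_unique_minimizer
    (T L ξ : ℝ) (hT : 0 ≤ T) (hL : 0 ≤ L)
    (μ : ℝ → ℝ → ℝ) (f : ℝ → ℝ → ℝ → ℝ) (g : ℝ → ℝ)
    (u : ℝ → ℝ → ℝ) (hu : ContDiff ℝ 1 (Function.uncurry u))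
    (hPDE : ∀ t ∈ Set.Icc (0 : ℝ) T, ∀ x : ℝ,
      deriv (fun s => u s x) t + μ t x * deriv (fun y => u t y) x
        + f t x (u t x) = 0)
    (hterm : ∀ x, u T x = g x)
    (hfL : ∀ t x a b, |f t x a - f t x b| ≤ L * |a - b|)
    (hfC1 : ∀ t x, ContDiff ℝ 1 (fun y => f t x y))
    (x : ℝ → ℝ) (hx : ∀ t ∈ Set.Icc (0 : ℝ) T, HasDerivAt x (μ t (x t)) t)
    (hx0 : x 0 = ξ)
    -- the flow `y₀ ↦ ỹ(·; y₀)` of the ODE `ỹ' = -f(t, x(t), ỹ)`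
    (Yt : ℝ → ℝ → ℝ)
    (hY0 : ∀ y₀, Yt y₀ 0 = y₀)
    (hYode : ∀ y₀, ∀ t ∈ Set.Icc (0 : ℝ) T,
      HasDerivAt (Yt y₀) (-(f t (x t) (Yt y₀ t))) t) :
    |g (x T) - Yt (u 0 ξ) T| ^ 2 = 0
    ∧ ∀ y₀ : ℝ, |g (x T) - Yt y₀ T| ^ 2 = 0 → y₀ = u 0 ξ :=
  shooting_loss_unique_minimizer_general T L ξ hT μ f g u hu hPDE hterm hfL x hx hx0 Yt hY0 hYode
end

section
/- Quadratic growth of the solution of the controlled linear dynamics: fix a grid 0 = t_0 < ... < t_N = T and define Y_{t_{n+1}} = Y_{t_n} − f(t_n, X_{t_n}, Y_{t_n}, Z_{t_n})Δt_n + Z_{t_n}·ΔW_n with f Lipschitz in (y,z) with constant L, Y_0 and all Z_{t_n} square-integrable and appropriately adapted. Then there is a constant C = C(L,T) (independent of N) such that E[|Y_{t_N}|²] ≤ C (E[|Y_0|²] + ∑_{n=0}^{N−1} (E[|f(t_n,X_{t_n},0,0)|²] + E[|Z_{t_n}|²]) Δt_n + 1). -/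
open MeasureTheory ProbabilityTheory

/-!
Write `Y = M - D`, where `M n = Y₀ + ∑_{k<n} Z_k · ΔW_k` is the martingale part and `D` the
accumulated drift. Since `ΔW_n` is centred, has covariance `Δt_n I` and is independent of
`F n`, the increments of `M` are orthogonal in `L²`, so
`E[M_n²] = E[Y₀²] + ∑_{k<n} Δt_k E|Z_k|²`. Pathwise, the Lipschitz bound on `f` gives
`|D_{n+1}| ≤ (1 + L Δt_n) |D_n| + Δt_n g_n` with `g_n = |f(t_n,X_n,0,0)| + L|Z_n| + L|M_n|`,
and the discrete Grönwall lemma followed by Cauchy–Schwarz yields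
`D_N² ≤ e^{2LT} T ∑ Δt_n g_n²`. Expectations are taken only at the very end, against an
integrable majorant: `f` is not assumed measurable, so `Y_N` need not be either.
-/

section Deterministic
open Finset Real

theorem discrete_gronwall_range {u b c : ℕ → ℝ} {N : ℕ} (hu0 : 0 ≤ u 0)
    (hu : ∀ n < N, u (n + 1) ≤ (1 + c n) * u n + b n) (hc : ∀ n < N, 0 ≤ c n)
    (hb : ∀ n < N, 0 ≤ b n) :
    u N ≤ (u 0 + ∑ k ∈ range N, b k) * exp (∑ k ∈ range N, c k) := by
  -- freeze the sequences after time `N`, so that the hypotheses hold for every `n`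
  have key := discrete_gronwall (u := fun n ↦ u (min n N)) (n₀ := 0)
    (c := fun n ↦ if n < N then c n else 0) (b := fun n ↦ if n < N then b n else 0)
    (by simpa using hu0) (fun n _ ↦ ?_) (fun n _ ↦ ?_) (fun n _ ↦ ?_) (Nat.zero_le N)
  · simpa [← range_eq_Ico, sum_ite_of_true, mem_range] using key
  · by_cases hn : n < N
    · simpa [hn, Nat.min_eq_left hn.le, Nat.min_eq_left (Nat.succ_le_of_lt hn)] using hu n hn
    · simp [hn, Nat.min_eq_right (not_lt.1 hn),
        Nat.min_eq_right (Nat.le_succ_of_le (not_lt.1 hn))]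
  · split_ifs with hn <;> simp [hc, hn]
  · split_ifs with hn <;> simp [hb, hn]

theorem sq_sum_mul_le_sum_mul_sum_mul_sq {ι : Type*} {s : Finset ι} {w g : ι → ℝ}
    (hw : ∀ k ∈ s, 0 ≤ w k) :
    (∑ k ∈ s, w k * g k) ^ 2 ≤ (∑ k ∈ s, w k) * ∑ k ∈ s, w k * g k ^ 2 :=
  sum_sq_le_sum_mul_sum_of_sq_le_mul s hw (fun k hk ↦ mul_nonneg (hw k hk) (sq_nonneg _))
    (fun k _ ↦ le_of_eq (by ring))

theorem abs_sub_le_of_perturbed_recursion {N : ℕ} {L : ℝ} {Δ y m φ a : ℕ → ℝ} (hL : 0 ≤ L)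
    (hΔ : ∀ k < N, 0 ≤ Δ k) (h0 : y 0 = m 0)
    (hrec : ∀ k < N, y (k + 1) - m (k + 1) = y k - m k - Δ k * φ k)
    (hφ : ∀ k < N, |φ k| ≤ a k + L * |y k|) (ha : ∀ k < N, 0 ≤ a k) :
    |y N - m N| ≤ (∑ k ∈ range N, Δ k * (a k + L * |m k|)) * exp (L * ∑ k ∈ range N, Δ k) := by
  have hstep (k : ℕ) (hk : k < N) : |y (k + 1) - m (k + 1)|
      ≤ (1 + L * Δ k) * |y k - m k| + Δ k * (a k + L * |m k|) := by
    have hy : |y k| ≤ |m k| + |y k - m k| := by simpa using abs_add_le (m k) (y k - m k)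
    calc |y (k + 1) - m (k + 1)| = |y k - m k - Δ k * φ k| := by rw [hrec k hk]
      _ ≤ |y k - m k| + Δ k * |φ k| := by
          simpa [abs_mul, abs_of_nonneg (hΔ k hk)] using abs_sub (y k - m k) (Δ k * φ k)
      _ ≤ |y k - m k| + Δ k * (a k + L * (|m k| + |y k - m k|)) := by
          gcongr
          · exact hΔ k hk
          · exact (hφ k hk).trans (by gcongr)
      _ = (1 + L * Δ k) * |y k - m k| + Δ k * (a k + L * |m k|) := by ring
  have hgron := discrete_gronwall_range (u := fun k ↦ |y k - m k|) (abs_nonneg _) hstep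
    (fun k hk ↦ mul_nonneg hL (hΔ k hk))
    (fun k hk ↦ mul_nonneg (hΔ k hk) (add_nonneg (ha k hk) (mul_nonneg hL (abs_nonneg _))))
  rwa [h0, sub_self, abs_zero, zero_add, ← mul_sum] at hgron

theorem sq_le_of_perturbed_recursion {N : ℕ} {L T : ℝ} {Δ y m φ a : ℕ → ℝ} (hL : 0 ≤ L)
    (hΔ : ∀ k < N, 0 ≤ Δ k) (hΔsum : ∑ k ∈ range N, Δ k = T) (h0 : y 0 = m 0)
    (hrec : ∀ k < N, y (k + 1) - m (k + 1) = y k - m k - Δ k * φ k)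
    (hφ : ∀ k < N, |φ k| ≤ a k + L * |y k|) (ha : ∀ k < N, 0 ≤ a k) :
    y N ^ 2 ≤ 2 * m N ^ 2 +
      4 * exp (2 * L * T) * T * ∑ k ∈ range N, Δ k * (a k ^ 2 + L ^ 2 * m k ^ 2) := by
  set g : ℕ → ℝ := fun k ↦ a k + L * |m k|
  have hT : 0 ≤ T := hΔsum ▸ sum_nonneg fun k hk ↦ hΔ k (mem_range.1 hk)
  have hg : ∑ k ∈ range N, Δ k * g k ^ 2
      ≤ 2 * ∑ k ∈ range N, Δ k * (a k ^ 2 + L ^ 2 * m k ^ 2) := by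
    rw [mul_sum]
    refine sum_le_sum fun k hk ↦ ?_
    have hgk : g k ^ 2 ≤ 2 * (a k ^ 2 + L ^ 2 * m k ^ 2) := by
      nlinarith [sq_nonneg (a k - L * |m k|), sq_abs (m k)]
    linarith [mul_le_mul_of_nonneg_left hgk (hΔ k (mem_range.1 hk))]
  have hd : (y N - m N) ^ 2 ≤ exp (2 * L * T) * (T * ∑ k ∈ range N, Δ k * g k ^ 2) :=
    calc (y N - m N) ^ 2 = |y N - m N| ^ 2 := (sq_abs _).symm
      _ ≤ ((∑ k ∈ range N, Δ k * g k) * exp (L * T)) ^ 2 := by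
          rw [← hΔsum]
          gcongr
          exact abs_sub_le_of_perturbed_recursion hL hΔ h0 hrec hφ ha
      _ = exp (2 * L * T) * (∑ k ∈ range N, Δ k * g k) ^ 2 := by
          rw [mul_pow, ← exp_nat_mul]; ring_nf
      _ ≤ exp (2 * L * T) * (T * ∑ k ∈ range N, Δ k * g k ^ 2) := by
          rw [← hΔsum]
          gcongr
          exact sq_sum_mul_le_sum_mul_sum_mul_sq fun k hk ↦ hΔ k (mem_range.1 hk)
  have : 0 ≤ exp (2 * L * T) * T := by positivity
  nlinarith [sq_nonneg (y N - 2 * m N), mul_le_mul_of_nonneg_left hg this]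

theorem abs_le_of_lipschitz {E ι : Type*} [Fintype ι] {L : ℝ}
    {f : ℝ → E → ℝ → (ι → ℝ) → ℝ}
    (hLip : ∀ s x y z y' z', |f s x y z - f s x y' z'|
      ≤ L * (|y - y'| + √(∑ i, (z i - z' i) ^ 2))) (s : ℝ) (x : E) (y : ℝ) (z : ι → ℝ) :
    |f s x y z| ≤ |f s x 0 0| + L * √(∑ i, z i ^ 2) + L * |y| := by
  have h := hLip s x y z 0 0
  simp only [sub_zero, Pi.zero_apply] at h
  linarith [abs_sub_abs_le_abs_sub (f s x y z) (f s x 0 0)]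

theorem sq_le_of_lipschitz_scheme {E ι : Type*} [Fintype ι] {L T : ℝ}
    {f : ℝ → E → ℝ → (ι → ℝ) → ℝ} (hL : 0 ≤ L)
    (hLip : ∀ s x y z y' z', |f s x y z - f s x y' z'|
      ≤ L * (|y - y'| + √(∑ i, (z i - z' i) ^ 2)))
    {N : ℕ} {t : ℕ → ℝ} (ht : ∀ k < N, 0 ≤ t (k + 1) - t k)
    (htT : ∑ k ∈ range N, (t (k + 1) - t k) = T) {x : ℕ → E} {y m : ℕ → ℝ} {z : ℕ → ι → ℝ}
    (h0 : y 0 = m 0)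
    (hrec : ∀ k < N, y (k + 1) - m (k + 1)
      = y k - m k - f (t k) (x k) (y k) (z k) * (t (k + 1) - t k)) :
    y N ^ 2 ≤ 2 * m N ^ 2 + 8 * exp (2 * L * T) * T * (1 + L ^ 2) * ∑ k ∈ range N,
      (t (k + 1) - t k) * (f (t k) (x k) 0 0 ^ 2 + ∑ i, z k i ^ 2 + m k ^ 2) := by
  set a : ℕ → ℝ := fun k ↦ |f (t k) (x k) 0 0| + L * √(∑ i, z k i ^ 2)
  have hbound := sq_le_of_perturbed_recursion (a := a) hL ht htT h0
    (fun k hk ↦ by rw [hrec k hk, mul_comm]) (fun k _ ↦ abs_le_of_lipschitz hLip _ _ _ _)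
    (fun k _ ↦ by positivity)
  have hT : 0 ≤ T := htT ▸ sum_nonneg fun k hk ↦ ht k (mem_range.1 hk)
  have ha (k : ℕ) : a k ^ 2 + L ^ 2 * m k ^ 2
      ≤ 2 * (1 + L ^ 2) * (f (t k) (x k) 0 0 ^ 2 + ∑ i, z k i ^ 2 + m k ^ 2) := by
    have hz : √(∑ i, z k i ^ 2) ^ 2 = ∑ i, z k i ^ 2 := sq_sqrt (by positivity)
    have hz0 : 0 ≤ ∑ i, z k i ^ 2 := by positivity
    have hak : a k ^ 2 ≤ 2 * f (t k) (x k) 0 0 ^ 2 + 2 * L ^ 2 * ∑ i, z k i ^ 2 := by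
      nlinarith [sq_nonneg (|f (t k) (x k) 0 0| - L * √(∑ i, z k i ^ 2)),
        sq_abs (f (t k) (x k) 0 0)]
    nlinarith [mul_nonneg (sq_nonneg L) (sq_nonneg (f (t k) (x k) 0 0)),
      mul_nonneg (sq_nonneg L) (sq_nonneg (m k)), sq_nonneg (m k)]
  calc y N ^ 2 ≤ 2 * m N ^ 2 + 4 * exp (2 * L * T) * T * ∑ k ∈ range N,
        (t (k + 1) - t k) * (a k ^ 2 + L ^ 2 * m k ^ 2) := hbound
    _ ≤ 2 * m N ^ 2 + 4 * exp (2 * L * T) * T * ∑ k ∈ range N, (t (k + 1) - t k) *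
        (2 * (1 + L ^ 2) * (f (t k) (x k) 0 0 ^ 2 + ∑ i, z k i ^ 2 + m k ^ 2)) := by
      gcongr with k hk
      · exact ht k (mem_range.1 hk)
      · exact ha k
    _ = _ := by
      simp only [mul_sum]
      exact congrArg _ (sum_congr rfl fun k _ ↦ by ring)

end Deterministic

section Independence
open Finset

variable {Ω ι : Type*} {m0 : MeasurableSpace Ω} {P : Measure Ω} {G : MeasurableSpace Ω}

theorem indepFun_comp_of_indep_comap {β γ δ : Type*} [MeasurableSpace β] [MeasurableSpace γ]
    [MeasurableSpace δ] {W : Ω → β} (hInd : Indep (MeasurableSpace.comap W inferInstance) G P)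
    {φ : Ω → γ} (hφ : Measurable[G] φ) {h : β → δ} (hh : Measurable h) :
    IndepFun φ (fun ω ↦ h (W ω)) P :=
  ((IndepFun_iff_Indep φ W P).2 (indep_of_indep_of_le_left hInd.symm hφ.comap_le)).comp
    measurable_id hh

theorem integral_add_sq_of_integral_mul_eq_zero {M B : Ω → ℝ} (hM : MemLp M 2 P)
    (hB : MemLp B 2 P) (hMB : ∫ ω, M ω * B ω ∂P = 0) :
    ∫ ω, (M ω + B ω) ^ 2 ∂P = ∫ ω, M ω ^ 2 ∂P + ∫ ω, B ω ^ 2 ∂P := by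
  have hMBi : Integrable (fun ω ↦ 2 * (M ω * B ω)) P := (hM.integrable_mul hB).const_mul 2
  have hM2B : Integrable (fun ω ↦ M ω ^ 2 + 2 * (M ω * B ω)) P := hM.integrable_sq.add hMBi
  calc ∫ ω, (M ω + B ω) ^ 2 ∂P = ∫ ω, M ω ^ 2 + 2 * (M ω * B ω) + B ω ^ 2 ∂P := by
        congr with ω; ring
    _ = ∫ ω, M ω ^ 2 ∂P + ∫ ω, B ω ^ 2 ∂P := by
        rw [integral_add hM2B hB.integrable_sq, integral_add hM.integrable_sq hMBi,
          integral_const_mul, hMB, mul_zero, add_zero]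

variable [Fintype ι] {W Z : Ω → ι → ℝ}

theorem memLp_sum_mul_of_indep (hInd : Indep (MeasurableSpace.comap W inferInstance) G P)
    (hW : MemLp W 2 P) (hZ : Measurable[G] Z) (hZ2 : MemLp Z 2 P) :
    MemLp (fun ω ↦ ∑ i, Z ω i * W ω i) 2 P := by
  refine memLp_finsetSum _ fun i _ ↦ ?_
  have hZi : Measurable[G] fun ω ↦ Z ω i := hZ.eval
  have hindep := indepFun_comp_of_indep_comap hInd (hZi.pow_const 2)
    ((measurable_pi_apply i).pow_const 2)
  refine (memLp_two_iff_integrable_sq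
    ((hZ2.eval i).aestronglyMeasurable.mul (hW.eval i).aestronglyMeasurable)).2 ?_
  simpa only [Pi.mul_def, mul_pow] using
    hindep.integrable_mul (hZ2.eval i).integrable_sq (hW.eval i).integrable_sq

theorem integral_mul_sum_mul_eq_zero_of_indep [IsProbabilityMeasure P]
    (hInd : Indep (MeasurableSpace.comap W inferInstance) G P) (hW : MemLp W 2 P)
    (hmean : ∀ i, ∫ ω, W ω i ∂P = 0) {M : Ω → ℝ} (hM : Measurable[G] M) (hM2 : MemLp M 2 P)
    (hZ : Measurable[G] Z) (hZ2 : MemLp Z 2 P) :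
    ∫ ω, M ω * ∑ i, Z ω i * W ω i ∂P = 0 := by
  have hind (i : ι) : IndepFun (fun ω ↦ M ω * Z ω i) (fun ω ↦ W ω i) P :=
    indepFun_comp_of_indep_comap hInd (hM.mul hZ.eval) (measurable_pi_apply i)
  have hMZ (i : ι) : Integrable (fun ω ↦ M ω * Z ω i) P := hM2.integrable_mul (hZ2.eval i)
  have hint (i : ι) : Integrable (fun ω ↦ M ω * Z ω i * W ω i) P :=
    (hind i).integrable_mul (hMZ i) ((hW.eval i).integrable one_le_two)
  calc ∫ ω, M ω * ∑ i, Z ω i * W ω i ∂P = ∫ ω, ∑ i, M ω * Z ω i * W ω i ∂P := by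
        simp_rw [mul_sum, mul_assoc]
    _ = ∑ i, ∫ ω, M ω * Z ω i * W ω i ∂P := integral_finsetSum _ fun i _ ↦ hint i
    _ = 0 := sum_eq_zero fun i _ ↦ by
        rw [(hind i).integral_fun_mul_eq_mul_integral (hMZ i).aestronglyMeasurable
          (hW.eval i).aestronglyMeasurable, hmean i, mul_zero]

theorem integral_sq_sum_mul_of_indep [DecidableEq ι]
    (hInd : Indep (MeasurableSpace.comap W inferInstance) G P) (hW : MemLp W 2 P) {Δ : ℝ}
    (hcov : ∀ i j, ∫ ω, W ω i * W ω j ∂P = if i = j then Δ else 0)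
    (hZ : Measurable[G] Z) (hZ2 : MemLp Z 2 P) :
    ∫ ω, (∑ i, Z ω i * W ω i) ^ 2 ∂P = Δ * ∫ ω, ∑ i, Z ω i ^ 2 ∂P := by
  have hind (i j : ι) :
      IndepFun (fun ω ↦ Z ω i * Z ω j) (fun ω ↦ W ω i * W ω j) P :=
    indepFun_comp_of_indep_comap hInd (hZ.eval.mul hZ.eval)
      ((measurable_pi_apply i).mul (measurable_pi_apply j))
  have hZZ (i j : ι) : Integrable (fun ω ↦ Z ω i * Z ω j) P :=
    (hZ2.eval i).integrable_mul (hZ2.eval j)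
  have hWW (i j : ι) : Integrable (fun ω ↦ W ω i * W ω j) P :=
    (hW.eval i).integrable_mul (hW.eval j)
  have hint (i j : ι) : Integrable (fun ω ↦ Z ω i * Z ω j * (W ω i * W ω j)) P :=
    (hind i j).integrable_mul (hZZ i j) (hWW i j)
  calc ∫ ω, (∑ i, Z ω i * W ω i) ^ 2 ∂P
        = ∫ ω, ∑ i, ∑ j, Z ω i * Z ω j * (W ω i * W ω j) ∂P := by
        congr with ω
        rw [sq, sum_mul_sum]
        exact sum_congr rfl fun i _ ↦ sum_congr rfl fun j _ ↦ by ring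
    _ = ∑ i, ∑ j, ∫ ω, Z ω i * Z ω j * (W ω i * W ω j) ∂P := by
        rw [integral_finsetSum _ fun i _ ↦ integrable_finsetSum _ fun j _ ↦ hint i j]
        exact sum_congr rfl fun i _ ↦ integral_finsetSum _ fun j _ ↦ hint i j
    _ = ∑ i, ∑ j, (∫ ω, Z ω i * Z ω j ∂P) * if i = j then Δ else 0 := by
        refine sum_congr rfl fun i _ ↦ sum_congr rfl fun j _ ↦ ?_
        rw [(hind i j).integral_fun_mul_eq_mul_integral (hZZ i j).aestronglyMeasurable
          (hWW i j).aestronglyMeasurable, hcov]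
    _ = Δ * ∫ ω, ∑ i, Z ω i ^ 2 ∂P := by
        rw [integral_finsetSum _ fun i _ ↦ (hZ2.eval i).integrable_sq, mul_sum]
        simp [sq, mul_comm]

end Independence

section ItoSum
open Finset

variable {Ω ι : Type*} [Fintype ι] {m0 : MeasurableSpace Ω}

def itoSum (ξ : Ω → ℝ) (Z W : ℕ → Ω → ι → ℝ) (n : ℕ) (ω : Ω) : ℝ :=
  ξ ω + ∑ k ∈ range n, ∑ i, Z k ω i * W k ω i

variable {ξ : Ω → ℝ} {Z W : ℕ → Ω → ι → ℝ}

@[simp]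
theorem itoSum_zero : itoSum ξ Z W 0 = ξ := by
  ext ω; simp [itoSum]

theorem itoSum_succ (n : ℕ) :
    itoSum ξ Z W (n + 1) = fun ω ↦ itoSum ξ Z W n ω + ∑ i, Z n ω i * W n ω i := by
  ext ω; simp [itoSum, sum_range_succ, add_assoc]

theorem measurable_itoSum {F : ℕ → MeasurableSpace Ω} (hF : Monotone F) {N : ℕ}
    (hξ : Measurable[F 0] ξ) (hZ : ∀ n < N, Measurable[F n] (Z n))
    (hW : ∀ n < N, Measurable[F (n + 1)] (W n)) {n : ℕ} (hn : n ≤ N) :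
    Measurable[F n] (itoSum ξ Z W n) := by
  refine (hξ.mono (hF n.zero_le) le_rfl).add (Finset.measurable_sum (m := F n) _ fun k hk ↦ ?_)
  have hk := mem_range.1 hk
  refine Finset.measurable_sum (m := F n) _ fun i _ ↦ ?_
  exact (((measurable_pi_apply i).comp (hZ k (by omega))).mono (hF hk.le) le_rfl).mul
    (((measurable_pi_apply i).comp (hW k (by omega))).mono (hF hk) le_rfl)

theorem memLp_itoSum_and_integral_sq {P : Measure Ω} [IsProbabilityMeasure P]
    {F : ℕ → MeasurableSpace Ω} (hF : Monotone F) {N : ℕ} (hξ : Measurable[F 0] ξ)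
    (hξ2 : MemLp ξ 2 P) (hZ : ∀ n < N, Measurable[F n] (Z n))
    (hZ2 : ∀ n < N, MemLp (Z n) 2 P) (hW : ∀ n < N, Measurable[F (n + 1)] (W n))
    (hW2 : ∀ n < N, MemLp (W n) 2 P)
    (hInd : ∀ n < N, Indep (MeasurableSpace.comap (W n) inferInstance) (F n) P)
    (hmean : ∀ n < N, ∀ i, ∫ ω, W n ω i ∂P = 0) [DecidableEq ι] {Δ : ℕ → ℝ}
    (hcov : ∀ n < N, ∀ i j, ∫ ω, W n ω i * W n ω j ∂P = if i = j then Δ n else 0) :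
    ∀ n ≤ N, MemLp (itoSum ξ Z W n) 2 P ∧
      ∫ ω, itoSum ξ Z W n ω ^ 2 ∂P
        = ∫ ω, ξ ω ^ 2 ∂P + ∑ k ∈ range n, Δ k * ∫ ω, ∑ i, Z k ω i ^ 2 ∂P := by
  intro n hn
  induction n with
  | zero => simpa using hξ2
  | succ n ih =>
    have hnN : n < N := hn
    obtain ⟨ihL2, ihint⟩ := ih hnN.le
    have hM := measurable_itoSum hF hξ hZ hW hnN.le
    have hB := memLp_sum_mul_of_indep (hInd n hnN) (hW2 n hnN) (hZ n hnN) (hZ2 n hnN)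
    rw [itoSum_succ, sum_range_succ, ← add_assoc, ← ihint, ← integral_sq_sum_mul_of_indep
      (hInd n hnN) (hW2 n hnN) (hcov n hnN) (hZ n hnN) (hZ2 n hnN)]
    exact ⟨ihL2.add hB, integral_add_sq_of_integral_mul_eq_zero ihL2 hB
      (integral_mul_sum_mul_eq_zero_of_indep (hInd n hnN) (hW2 n hnN) (hmean n hnN) hM ihL2
        (hZ n hnN) (hZ2 n hnN))⟩

end ItoSum

section Integration
open Finset

variable {Ω : Type*} {m0 : MeasurableSpace Ω} {P : Measure Ω}

theorem integral_sq_le_of_le_add_sum {N : ℕ} {K : ℝ} {Δ : ℕ → ℝ} {v : Ω → ℝ}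
    {a b M : ℕ → Ω → ℝ} (ha : ∀ k < N, Integrable (a k) P) (hb : ∀ k < N, Integrable (b k) P)
    (hM : ∀ n ≤ N, MemLp (M n) 2 P)
    (hv : ∀ ω, v ω ^ 2 ≤
      2 * M N ω ^ 2 + K * ∑ k ∈ range N, Δ k * (a k ω + b k ω + M k ω ^ 2)) :
    ∫ ω, v ω ^ 2 ∂P ≤ 2 * ∫ ω, M N ω ^ 2 ∂P + K * ∑ k ∈ range N,
      Δ k * ((∫ ω, a k ω ∂P) + (∫ ω, b k ω ∂P) + ∫ ω, M k ω ^ 2 ∂P) := by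
  have hab (k : ℕ) (hk : k < N) : Integrable (fun ω ↦ a k ω + b k ω) P :=
    (ha k hk).add (hb k hk)
  have hterm (k : ℕ) (hk : k < N) : Integrable (fun ω ↦ a k ω + b k ω + M k ω ^ 2) P :=
    (hab k hk).add (hM k hk.le).integrable_sq
  have hsum : Integrable (fun ω ↦ ∑ k ∈ range N, Δ k * (a k ω + b k ω + M k ω ^ 2)) P :=
    integrable_finsetSum _ fun k hk ↦ (hterm k (mem_range.1 hk)).const_mul _
  have hMN : Integrable (fun ω ↦ 2 * M N ω ^ 2) P := (hM N le_rfl).integrable_sq.const_mul 2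
  calc ∫ ω, v ω ^ 2 ∂P
      ≤ ∫ ω, 2 * M N ω ^ 2 + K * ∑ k ∈ range N, Δ k * (a k ω + b k ω + M k ω ^ 2) ∂P :=
        integral_mono_of_nonneg (.of_forall fun ω ↦ sq_nonneg _) (hMN.add (hsum.const_mul K))
          (.of_forall hv)
    _ = _ := by
        rw [integral_add hMN (hsum.const_mul K), integral_const_mul, integral_const_mul,
          integral_finsetSum _ fun k hk ↦ (hterm k (mem_range.1 hk)).const_mul _]
        congr 2
        refine sum_congr rfl fun k hk ↦ ?_
        have hk := mem_range.1 hk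
        rw [integral_const_mul, integral_add (hab k hk) (hM k hk.le).integrable_sq,
          integral_add (ha k hk) (hb k hk)]

theorem integral_sq_le_of_pathwise_bound {N : ℕ} {T K : ℝ} {Δ : ℕ → ℝ} {v ξ : Ω → ℝ}
    {a b M : ℕ → Ω → ℝ} (hΔ : ∀ k < N, 0 ≤ Δ k) (hΔsum : ∑ k ∈ range N, Δ k = T)
    (hK : 0 ≤ K) (ha : ∀ k < N, Integrable (a k) P) (ha0 : ∀ k, 0 ≤ a k)
    (hb : ∀ k < N, Integrable (b k) P) (hb0 : ∀ k, 0 ≤ b k)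
    (hM : ∀ n ≤ N, MemLp (M n) 2 P ∧
      ∫ ω, M n ω ^ 2 ∂P = ∫ ω, ξ ω ^ 2 ∂P + ∑ k ∈ range n, Δ k * ∫ ω, b k ω ∂P)
    (hv : ∀ ω, v ω ^ 2 ≤
      2 * M N ω ^ 2 + K * ∑ k ∈ range N, Δ k * (a k ω + b k ω + M k ω ^ 2)) :
    ∫ ω, v ω ^ 2 ∂P ≤ (2 + K * (1 + T)) *
      (∫ ω, ξ ω ^ 2 ∂P + ∑ k ∈ range N, ((∫ ω, a k ω ∂P) + ∫ ω, b k ω ∂P) * Δ k) := by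
  set S := ∑ k ∈ range N, ((∫ ω, a k ω ∂P) + ∫ ω, b k ω ∂P) * Δ k
  have hξ : 0 ≤ ∫ ω, ξ ω ^ 2 ∂P := integral_nonneg fun ω ↦ sq_nonneg _
  have hab (k : ℕ) : 0 ≤ (∫ ω, a k ω ∂P) + ∫ ω, b k ω ∂P :=
    add_nonneg (integral_nonneg (ha0 k)) (integral_nonneg (hb0 k))
  have hMQ (n : ℕ) (hn : n ≤ N) : ∫ ω, M n ω ^ 2 ∂P ≤ ∫ ω, ξ ω ^ 2 ∂P + S := by
    rw [(hM n hn).2]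
    gcongr
    calc ∑ k ∈ range n, Δ k * ∫ ω, b k ω ∂P
        ≤ ∑ k ∈ range n, ((∫ ω, a k ω ∂P) + ∫ ω, b k ω ∂P) * Δ k :=
          sum_le_sum fun k hk ↦ by
            nlinarith [hΔ k ((mem_range.1 hk).trans_le hn), integral_nonneg (ha0 k) (μ := P)]
      _ ≤ S := sum_le_sum_of_subset_of_nonneg (range_subset_range.2 hn)
          fun k hk _ ↦ mul_nonneg (hab k) (hΔ k (mem_range.1 hk))
  calc ∫ ω, v ω ^ 2 ∂P ≤ 2 * ∫ ω, M N ω ^ 2 ∂P + K * ∑ k ∈ range N,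
        Δ k * ((∫ ω, a k ω ∂P) + (∫ ω, b k ω ∂P) + ∫ ω, M k ω ^ 2 ∂P) :=
        integral_sq_le_of_le_add_sum ha hb (fun n hn ↦ (hM n hn).1) hv
    _ ≤ 2 * (∫ ω, ξ ω ^ 2 ∂P + S) + K * ∑ k ∈ range N,
          Δ k * ((∫ ω, a k ω ∂P) + (∫ ω, b k ω ∂P) + (∫ ω, ξ ω ^ 2 ∂P + S)) := by
        gcongr with k hk
        · exact hMQ N le_rfl
        · exact hΔ k (mem_range.1 hk)
        · exact hMQ k (mem_range.1 hk).le
    _ = 2 * (∫ ω, ξ ω ^ 2 ∂P + S) + K * (S + T * (∫ ω, ξ ω ^ 2 ∂P + S)) := by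
        rw [← hΔsum, sum_mul, ← sum_add_distrib]
        congr 2
        exact sum_congr rfl fun k _ ↦ by ring
    _ ≤ (2 + K * (1 + T)) * (∫ ω, ξ ω ^ 2 ∂P + S) := by nlinarith

end Integration

/-- Discrete Grönwall-type a priori bound for the forward-simulated `Y`-process
in the Deep BSDE method: there is a constant `C = C(L,T)`, independent of the
grid, the dimension and the data, such that
`E[|Y_{t_N}|²] ≤ C (E[|Y₀|²] + ∑ (E[|f(t_n,X_{t_n},0,0)|²] + E[|Z_{t_n}|²]) Δt_n + 1)`. -/
theorem deep_bsde_discrete_apriori_bound (L T : ℝ) (hL : 0 ≤ L) (hT : 0 < T) :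
    ∃ C : ℝ, 0 < C ∧
    ∀ (Ω : Type) (m0 : MeasurableSpace Ω) (P : Measure Ω),
      IsProbabilityMeasure P →
    ∀ (d N : ℕ) (t : ℕ → ℝ),
      t 0 = 0 → t N = T → (∀ n < N, t n < t (n + 1)) →
    ∀ (F : ℕ → MeasurableSpace Ω), (∀ n, F n ≤ m0) → Monotone F →
    ∀ (f : ℝ → (Fin d → ℝ) → ℝ → (Fin d → ℝ) → ℝ)
      (X : ℕ → Ω → Fin d → ℝ) (Y : ℕ → Ω → ℝ) (Z : ℕ → Ω → Fin d → ℝ)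
      (ΔW : ℕ → Ω → Fin d → ℝ),
    -- f Lipschitz in (y, z) with constant L, uniformly in (t, x)
    (∀ s x y z y' z', |f s x y z - f s x y' z'|
        ≤ L * (|y - y'| + Real.sqrt (∑ i, (z i - z' i) ^ 2))) →
    -- the scheme
    (∀ n < N, ∀ ω, Y (n + 1) ω
        = Y n ω - f (t n) (X n ω) (Y n ω) (Z n ω) * (t (n + 1) - t n)
          + ∑ i, Z n ω i * ΔW n ω i) →
    -- adaptedness and integrability
    (∀ n, Measurable[F n] (X n)) →
    Measurable[F 0] (Y 0) → MemLp (Y 0) 2 P →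
    (∀ n < N, Measurable[F n] (Z n)) → (∀ n < N, MemLp (Z n) 2 P) →
    (∀ n < N, MemLp (fun ω => f (t n) (X n ω) 0 0) 2 P) →
    -- Brownian increments: independent of the past, mean zero, covariance Δtₙ I
    (∀ n < N, Measurable[F (n + 1)] (ΔW n)) →
    (∀ n < N, MemLp (ΔW n) 2 P) →
    (∀ n < N, Indep (MeasurableSpace.comap (ΔW n) inferInstance) (F n) P) →
    (∀ n < N, ∀ i, (∫ ω, ΔW n ω i ∂P) = 0) →
    (∀ n < N, ∀ i j, (∫ ω, ΔW n ω i * ΔW n ω j ∂P)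
        = if i = j then t (n + 1) - t n else 0) →
    (∫ ω, (Y N ω) ^ 2 ∂P)
      ≤ C * ((∫ ω, (Y 0 ω) ^ 2 ∂P)
          + (∑ n ∈ Finset.range N,
              ((∫ ω, (f (t n) (X n ω) 0 0) ^ 2 ∂P)
                + ∫ ω, (∑ i, (Z n ω i) ^ 2) ∂P) * (t (n + 1) - t n))
          + 1) := by
  refine ⟨2 + 8 * Real.exp (2 * L * T) * T * (1 + L ^ 2) * (1 + T), by positivity, ?_⟩
  intro Ω m0 P _ d N t ht0 htN htlt F _ hF f X Y Z ΔW hLip hY _ hY0 hY0L2 hZ hZL2 hf0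
    hW hWL2 hInd hmean hcov
  have hΔ (k : ℕ) (hk : k < N) : 0 ≤ t (k + 1) - t k := (sub_pos.2 (htlt k hk)).le
  have hΔsum : ∑ k ∈ Finset.range N, (t (k + 1) - t k) = T := by
    rw [Finset.sum_range_sub, htN, ht0, sub_zero]
  have hpath (ω : Ω) := sq_le_of_lipschitz_scheme (x := fun k ↦ X k ω) (y := fun k ↦ Y k ω)
    (m := fun k ↦ itoSum (Y 0) Z ΔW k ω) (z := fun k ↦ Z k ω) hL hLip hΔ hΔsum (by simp)
    (fun k hk ↦ by rw [hY k hk ω, itoSum_succ]; ring)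
  calc ∫ ω, Y N ω ^ 2 ∂P
      ≤ (2 + 8 * Real.exp (2 * L * T) * T * (1 + L ^ 2) * (1 + T)) * _ :=
        integral_sq_le_of_pathwise_bound hΔ hΔsum (by positivity)
          (fun k hk ↦ (hf0 k hk).integrable_sq) (fun k ω ↦ sq_nonneg _)
          (fun k hk ↦ integrable_finsetSum _ fun i _ ↦ ((hZL2 k hk).eval i).integrable_sq)
          (fun k ω ↦ Finset.sum_nonneg fun i _ ↦ sq_nonneg _)
          (memLp_itoSum_and_integral_sq hF hY0 hY0L2 hZ hZL2 hW hWL2 hInd hmean hcov) hpath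
    _ ≤ _ := mul_le_mul_of_nonneg_left (le_add_of_nonneg_right zero_le_one) (by positivity)
end
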